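/- Let X, Y be disjoint sets of distinct reals, N = |X| + |Y|, y ∈ Y, Y' = Y \ {y}. Let y* > max(X ∪ Y') and y_* < min(X ∪ Y'). Then T(Y, X) ≤ max{T({y_*} ∪ Y', X), T({y*} ∪ Y', X)}, i.e., the Ansari-Bradley statistic of Y versus X is maximized over the single value y when it is placed at an extreme rank. -/

import Mathlib

open Finset

/-- rank of `x` in `Z`: number of elements of `Z` less than or equal to `x`. -/
noncomputable def rk (x : ℝ) (Z : Finset ℝ) : ℕ := (Z.filter (fun z => z ≤ x)).card

/-- Ansari-Bradley test statistic. -/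
noncomputable def ABT (A B : Finset ℝ) : ℝ :=
  ∑ a ∈ A, |(rk a (A ∪ B) : ℝ) - (((A ∪ B).card : ℝ) + 1) / 2|

/-!
Put `V = Y' ∪ X`, `M = |V|` and `c = (M + 2) / 2`. Inserting a new value `t` into `V` raises the
rank of `w ∈ Y'` by `[t ≤ w]`, so
`T({t} ∪ Y', X) = |1 + rk t V - c| + ∑_{w ∈ Y'} |[t ≤ w] + rk w V - c|`.
If the rank `1 + r` of `y` lies below the centre `c`, moving `y` to the bottom raises its own
term by `r`, while each of the at most `r` elements of `Y'` below `y` changes its term by at most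
one; symmetrically, above the centre, moving `y` to the top raises its term by `M - r` and
moves the at most `M - r` elements of `Y'` above `y`.
-/

lemma rk_insert {t : ℝ} {Z : Finset ℝ} (ht : t ∉ Z) (a : ℝ) :
    rk a (insert t Z) = (if t ≤ a then 1 else 0) + rk a Z := by
  unfold rk
  rw [filter_insert]
  split_ifs
  · rw [card_insert_of_notMem (fun h => ht (mem_filter.mp h).1), add_comm]
  · rw [zero_add]

lemma rk_eq_zero_of_forall_lt {t : ℝ} {Z : Finset ℝ} (h : ∀ w ∈ Z, t < w) : rk t Z = 0 := by
  unfold rk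
  rw [filter_false_of_mem fun w hw => not_le.mpr (h w hw), card_empty]

lemma rk_eq_card_of_forall_le {t : ℝ} {Z : Finset ℝ} (h : ∀ w ∈ Z, w ≤ t) : rk t Z = Z.card := by
  unfold rk
  rw [filter_true_of_mem h]

lemma card_filter_lt_le_rk (A B : Finset ℝ) (y : ℝ) :
    #(A.filter (· < y)) ≤ rk y (A ∪ B) :=
  card_le_card fun w hw => by
    rw [mem_filter] at hw ⊢
    exact ⟨mem_union_left _ hw.1, hw.2.le⟩

lemma card_filter_ge_add_rk_le {A : Finset ℝ} {y : ℝ} (hyA : y ∉ A) (B : Finset ℝ) :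
    #(A.filter (y ≤ ·)) + rk y (A ∪ B) ≤ #(A ∪ B) := by
  have hsub : #(A.filter (y ≤ ·)) ≤ #((A ∪ B).filter (fun v => ¬ v ≤ y)) :=
    card_le_card fun w hw => by
      rw [mem_filter] at hw ⊢
      exact ⟨mem_union_left _ hw.1, not_le.mpr (hw.2.lt_of_ne fun h => hyA (h ▸ hw.1))⟩
  have hsplit := card_filter_add_card_filter_not (s := A ∪ B) (p := fun v => v ≤ y)
  unfold rk
  omega

lemma ABT_insert {t : ℝ} {A B : Finset ℝ} (htA : t ∉ A) (htB : t ∉ B) :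
    ABT (insert t A) B = |1 + (rk t (A ∪ B) : ℝ) - (#(A ∪ B) + 2) / 2|
      + ∑ a ∈ A, |(if t ≤ a then 1 else 0) + (rk a (A ∪ B) : ℝ) - (#(A ∪ B) + 2) / 2| := by
  have htV : t ∉ A ∪ B := by simp [htA, htB]
  unfold ABT
  rw [insert_union, sum_insert htA, card_insert_of_notMem htV, rk_insert htV,
    if_pos le_rfl]
  push_cast
  congr 1
  · ring_nf
  · refine sum_congr rfl fun a _ => ?_
    rw [rk_insert htV]
    push_cast
    ring_nf

lemma sum_abs_ite_le_sum_abs_one_add (A : Finset ℝ) (f : ℝ → ℝ) (y : ℝ) :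
    ∑ a ∈ A, |(if y ≤ a then 1 else 0) + f a|
      ≤ ∑ a ∈ A, |1 + f a| + #(A.filter (· < y)) := by
  rw [← sum_boole, ← sum_add_distrib]
  refine sum_le_sum fun a _ => ?_
  by_cases hya : y ≤ a
  · simp [hya, not_lt.mpr hya]
  · have := abs_add_le (1 + f a) (-1)
    simp only [hya, not_le.mp hya, if_true, if_false]
    norm_num at this ⊢
    linarith

lemma sum_abs_ite_le_sum_abs (A : Finset ℝ) (f : ℝ → ℝ) (y : ℝ) :
    ∑ a ∈ A, |(if y ≤ a then 1 else 0) + f a|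
      ≤ ∑ a ∈ A, |f a| + #(A.filter (y ≤ ·)) := by
  rw [← sum_boole, ← sum_add_distrib]
  refine sum_le_sum fun a _ => ?_
  by_cases hya : y ≤ a
  · simpa [hya, add_comm] using abs_add_le 1 (f a)
  · simp [hya]

theorem ABT_insert_le_max_extremes {A B : Finset ℝ} {y lo hi : ℝ} (hyA : y ∉ A) (hyB : y ∉ B)
    (hlo : ∀ w ∈ A ∪ B, lo < w) (hhi : ∀ w ∈ A ∪ B, w < hi) :
    ABT (insert y A) B ≤ max (ABT (insert lo A) B) (ABT (insert hi A) B) := by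
  have hT_y := ABT_insert hyA hyB
  set V := A ∪ B
  set c : ℝ := (#V + 2) / 2
  have hloV : lo ∉ V := fun h => lt_irrefl _ (hlo lo h)
  have hhiV : hi ∉ V := fun h => lt_irrefl _ (hhi hi h)
  have hT_lo : ABT (insert lo A) B = |1 - c| + ∑ a ∈ A, |1 + (rk a V : ℝ) - c| := by
    rw [ABT_insert (notMem_union.mp hloV).1 (notMem_union.mp hloV).2,
      rk_eq_zero_of_forall_lt hlo, Nat.cast_zero, add_zero]
    exact congrArg _ (sum_congr rfl fun a ha => by
      rw [if_pos (hlo a (mem_union_left _ ha)).le])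
  have hT_hi : ABT (insert hi A) B = |1 + #V - c| + ∑ a ∈ A, |(rk a V : ℝ) - c| := by
    rw [ABT_insert (notMem_union.mp hhiV).1 (notMem_union.mp hhiV).2,
      rk_eq_card_of_forall_le fun w hw => (hhi w hw).le]
    exact congrArg _ (sum_congr rfl fun a ha => by
      rw [if_neg (not_le.mpr (hhi a (mem_union_left _ ha))), zero_add])
  simp only [add_sub_assoc] at hT_lo hT_hi hT_y
  have hc_lo : 1 ≤ c := by simp only [c]; linarith [(#V).cast_nonneg (α := ℝ)]
  rcases le_total (1 + (rk y V : ℝ)) c with hr | hr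
  · have hbelow : (#(A.filter (· < y)) : ℝ) ≤ rk y V := by exact_mod_cast card_filter_lt_le_rk A B y
    have hsum := sum_abs_ite_le_sum_abs_one_add A (fun a => (rk a V : ℝ) - c) y
    refine le_max_of_le_left ?_
    rw [hT_y, hT_lo, abs_of_nonpos (by linarith), abs_of_nonpos (by linarith)]
    linarith
  · have habove : (#(A.filter (y ≤ ·)) : ℝ) + rk y V ≤ #V := by
      exact_mod_cast card_filter_ge_add_rk_le hyA B
    have hsum := sum_abs_ite_le_sum_abs A (fun a => (rk a V : ℝ) - c) y
    refine le_max_of_le_right ?_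
    rw [hT_y, hT_hi, abs_of_nonneg (by linarith), abs_of_nonneg (by linarith)]
    linarith

theorem stmt15 (X Y : Finset ℝ) (y : ℝ) (hd : Disjoint X Y) (hy : y ∈ Y)
    (Y' : Finset ℝ) (hY' : Y' = Y.erase y)
    (ystar ylow : ℝ)
    (hstar : ∀ w ∈ X ∪ Y', w < ystar)
    (hlow : ∀ w ∈ X ∪ Y', ylow < w) :
    ABT Y X ≤ max (ABT (insert ylow Y') X) (ABT (insert ystar Y') X) := by
  have hY : Y = insert y Y' := by rw [hY', insert_erase hy]
  rw [union_comm] at hstar hlow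
  rw [hY]
  exact ABT_insert_le_max_extremes (hY' ▸ notMem_erase y Y) (disjoint_right.mp hd hy) hlow hstar
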